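/- Let χ : ℤ × ℤ → ℂˣ be a group homomorphism which is not trivial (χ(g) ≠ 1 for some g), and let ℂ_χ denote the one-dimensional complex representation of the group ℤ × ℤ in which g acts by multiplication by χ(g). Then the group homology H_m(ℤ × ℤ; ℂ_χ) vanishes for every m ≥ 0. -/

import Mathlib

/-! Pick `g` with `χ g ≠ 1`. The element `r = [g] - 1` of the commutative group ring acts as zero
on the trivial module `ℂ` and as the nonzero scalar `χ g - 1` on `ℂ_χ`. Multiplication by `r` on
`Tor_m(ℂ, ℂ_χ)` is then an isomorphism, being `Tor_m(ℂ, -)` applied to an isomorphism, and also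
zero: on a projective resolution of `ℂ_χ` it lifts to the chain map `r • 𝟙`, which becomes zero
after tensoring with `ℂ`. -/

open CategoryTheory

/-- The one-dimensional representation of `ℤ × ℤ` on `ℂ` in which `g` acts by
multiplication by `χ g`. -/
noncomputable def charRep (χ : Multiplicative (ℤ × ℤ) →* ℂˣ) :
    Representation ℂ (Multiplicative (ℤ × ℤ)) ℂ where
  toFun g := (χ g : ℂ) • LinearMap.id
  map_one' := by simp [Module.End.one_eq_id]
  map_mul' g h := by
    ext
    simp [Module.End.mul_apply, mul_smul, mul_comm]

open Limits MonoidalCategory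

namespace ChainComplex

variable {R : Type*} [Semiring R] {C : Type*} [Category C] [Preadditive C]
  [CategoryTheory.Linear R C] [HasZeroObject C]

theorem single₀_map_smul {X Y : C} (r : R) (f : X ⟶ Y) :
    (single₀ C).map (r • f) = r • (single₀ C).map f := by
  apply HomologicalComplex.from_single_hom_ext
  rw [single₀_map_f_zero, HomologicalComplex.smul_f_apply, single₀_map_f_zero]
  rfl

end ChainComplex

namespace CategoryTheory.Functor

variable {R : Type*} [Semiring R] {C D : Type*} [Category C] [Abelian C]
  [CategoryTheory.Linear R C] [HasProjectiveResolutions C] [Category D] [Abelian D]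

theorem leftDerived_map_smul_id_eq_zero (F : C ⥤ D) [F.Additive] (r : R)
    (hF : ∀ M : C, F.map (r • 𝟙 M) = 0) (n : ℕ) (Y : C) :
    (F.leftDerived n).map (r • 𝟙 Y) = 0 := by
  let P := projectiveResolution Y
  have hlift : (r • 𝟙 P.complex) ≫ P.π = P.π ≫ (ChainComplex.single₀ C).map (r • 𝟙 Y) := by
    rw [ChainComplex.single₀_map_smul, map_id, Linear.smul_comp, Linear.comp_smul,
      Category.id_comp, Category.comp_id]
  have hkill : (F.mapHomologicalComplex _).map (r • 𝟙 P.complex) = 0 := by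
    ext
    simp only [mapHomologicalComplex_map_f, HomologicalComplex.smul_f_apply,
      HomologicalComplex.id_f, hF, HomologicalComplex.zero_f]
    rfl
  rw [F.leftDerived_map_eq n _ (r • 𝟙 P.complex) hlift, comp_map, hkill, Functor.map_zero,
    zero_comp, comp_zero]

theorem isZero_leftDerived_obj_of_isIso_smul_id (F : C ⥤ D) [F.Additive] (r : R)
    (hF : ∀ M : C, F.map (r • 𝟙 M) = 0) (n : ℕ) (Y : C) [IsIso (r • 𝟙 Y)] :
    IsZero ((F.leftDerived n).obj Y) :=
  IsZero.of_mono_eq_zero _ (F.leftDerived_map_smul_id_eq_zero r hF n Y)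

end CategoryTheory.Functor

namespace ModuleCat

variable {R : Type*} [CommRing R]

theorem tensoringLeft_obj_map_smul_id_eq_zero {X : ModuleCat R} {r : R} (hX : r • 𝟙 X = 0)
    (M : ModuleCat R) : ((tensoringLeft (ModuleCat R)).obj X).map (r • 𝟙 M) = 0 := by
  calc X ◁ (r • 𝟙 M) = (r • 𝟙 X) ▷ M := by simp
    _ = 0 := by rw [hX, MonoidalPreadditive.zero_whiskerRight]

theorem isZero_Tor_of_smul_id {X Y : ModuleCat R} (r : R) (hX : r • 𝟙 X = 0)
    [IsIso (r • 𝟙 Y)] (n : ℕ) : IsZero (((Tor (ModuleCat R) n).obj X).obj Y) :=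
  Functor.isZero_leftDerived_obj_of_isIso_smul_id _ r
    (tensoringLeft_obj_map_smul_id_eq_zero hX) n Y

end ModuleCat

namespace Representation

theorem asAlgebraHom_of_sub_one {k G V : Type*} [CommRing k] [Monoid G] [AddCommGroup V]
    [Module k V] (ρ : Representation k G V) (g : G) :
    ρ.asAlgebraHom (MonoidAlgebra.of k G g - 1) = ρ g - 1 := by
  rw [map_sub, asAlgebraHom_of, map_one]

variable {k G V : Type*} [CommRing k] [CommMonoid G] [AddCommGroup V] [Module k V]
  (ρ : Representation k G V)

theorem smul_id_asModule_hom (a : MonoidAlgebra k G) :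
    ⇑(a • 𝟙 (ModuleCat.of (MonoidAlgebra k G) ρ.asModule)).hom =
      ρ.asModuleEquiv.symm ∘ ρ.asAlgebraHom a ∘ ρ.asModuleEquiv := by
  ext x
  simp [← asModuleEquiv_map_smul]

theorem smul_id_asModule_eq_zero {a : MonoidAlgebra k G} (h : ρ.asAlgebraHom a = 0) :
    a • 𝟙 (ModuleCat.of (MonoidAlgebra k G) ρ.asModule) = 0 := by
  ext x
  change (a • 𝟙 (ModuleCat.of (MonoidAlgebra k G) ρ.asModule)).hom x = 0
  rw [smul_id_asModule_hom, Function.comp_apply, Function.comp_apply, h, LinearMap.zero_apply,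
    map_zero]

theorem isIso_smul_id_asModule {a : MonoidAlgebra k G} (h : IsUnit (ρ.asAlgebraHom a)) :
    IsIso (a • 𝟙 (ModuleCat.of (MonoidAlgebra k G) ρ.asModule)) := by
  rw [ConcreteCategory.isIso_iff_bijective]
  show Function.Bijective ⇑(a • 𝟙 (ModuleCat.of (MonoidAlgebra k G) ρ.asModule)).hom
  rw [smul_id_asModule_hom]
  exact ρ.asModuleEquiv.symm.bijective.comp
    (((Module.End.isUnit_iff _).mp h).comp ρ.asModuleEquiv.bijective)

end Representation

theorem charRep_asAlgebraHom_of_sub_one (χ : Multiplicative (ℤ × ℤ) →* ℂˣ)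
    (g : Multiplicative (ℤ × ℤ)) :
    (charRep χ).asAlgebraHom (MonoidAlgebra.of ℂ _ g - 1) = algebraMap ℂ _ ((χ g : ℂ) - 1) := by
  rw [Representation.asAlgebraHom_of_sub_one, map_sub, map_one, Module.algebraMap_end_eq_smul_id]
  rfl

/-- If `χ : ℤ × ℤ → ℂˣ` is a nontrivial character, then the group homology of
`ℤ × ℤ` with coefficients in the one-dimensional representation `ℂ_χ` vanishes
in every degree; group homology is expressed as
`Tor_m` over the group ring `ℂ[ℤ × ℤ]` of the trivial module `ℂ` and `ℂ_χ`. -/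
theorem groupHomology_of_nontrivial_character_isZero
    (χ : Multiplicative (ℤ × ℤ) →* ℂˣ) (hχ : ∃ g, χ g ≠ 1) (m : ℕ) :
    Limits.IsZero
      (((Tor (ModuleCat (MonoidAlgebra ℂ (Multiplicative (ℤ × ℤ)))) m).obj
          (ModuleCat.of (MonoidAlgebra ℂ (Multiplicative (ℤ × ℤ)))
            (Representation.trivial ℂ (G := Multiplicative (ℤ × ℤ)) (V := ℂ)).asModule)).obj
        (ModuleCat.of (MonoidAlgebra ℂ (Multiplicative (ℤ × ℤ)))
          (charRep χ).asModule)) := by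
  obtain ⟨g, hg⟩ := hχ
  have hχg : (χ g : ℂ) - 1 ≠ 0 := sub_ne_zero.mpr fun h => hg (Units.ext h)
  set r := MonoidAlgebra.of ℂ _ g - 1
  have hX : r • 𝟙 (ModuleCat.of _ (Representation.trivial ℂ _ ℂ).asModule) = 0 :=
    Representation.smul_id_asModule_eq_zero _ <| by
      rw [Representation.asAlgebraHom_of_sub_one, Representation.isTrivial_def,
        ← Module.End.one_eq_id, sub_self]
  have : IsIso (r • 𝟙 (ModuleCat.of _ (charRep χ).asModule)) :=
    Representation.isIso_smul_id_asModule _ <| by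
      rw [charRep_asAlgebraHom_of_sub_one]
      exact (isUnit_iff_ne_zero.mpr hχg).map _
  exact ModuleCat.isZero_Tor_of_smul_id r hX m
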